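/- arXiv:2508.19458 — 3 statements merged into one kernel-verified Lean document; each statement's English description precedes it below -/
import Mathlib

section
/- Let a ≥ 0, r ≥ 0, and let k > 4 be an integer, and Y ~ χ²(k). Then both KL(a + Y ‖ (1+r)Y) and KL(a + (1+r)Y ‖ Y) are at most a²/(2k-8) + kr²/4 + ar/2. -/
/-!
Let `P` be the law of `b + c Y` and `Q` that of `c' Y`, with `Y ~ χ²(k)`, `b ≥ 0` and
`c, c' > 0`. Both have explicit gamma-type densities on `(0, ∞)`, so evaluated at `b + c Y`
the log-likelihood ratio is
`(k/2 - 1) (log Y - log (b + c Y)) + ((b + c Y) / c' - Y) / 2 + (k/2) log c' - log c`.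
Writing `log (b + c Y) = log c + log Y + log (1 + t)` with `t = b / (c Y)` and using
`log (1 + t) ≥ t - t² / 2`, the divergence `KL(P ‖ Q)` is bounded in terms of
`E Y = k`, `E[1/Y] = 1/(k-2)` and `E[1/Y²] = 1/((k-2)(k-4))`; these moments come from
multiplying the `Γ(a)` density by `x^s`, which gives a multiple of the `Γ(a + s)` density.
The two divergences of the theorem are the cases `(b, c, c') = (a, 1, 1 + r)` and
`(a, 1 + r, 1)`, and `r - r²/2 ≤ log (1 + r) ≤ r/(1 + r) + r²/2` controls the remaining terms.
-/

open MeasureTheory ProbabilityTheory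

/-- Kullback–Leibler divergence of `P` with respect to `Q`, as the integral of the
logarithm of the Radon–Nikodym derivative. -/
noncomputable def klDiv (P Q : Measure ℝ) : ℝ :=
  ∫ x, Real.log ((P.rnDeriv Q x).toReal) ∂P

/-- The chi-squared distribution with `k` degrees of freedom, i.e. the Gamma
distribution with shape `k/2` and rate `1/2`. -/
noncomputable def chiSquared (k : ℕ) : Measure ℝ :=
  gammaMeasure ((k : ℝ) / 2) (1 / 2)

open Real Set
open scoped ENNReal

lemma le_of_hasDerivAt_le_of_le {f g f' g' : ℝ → ℝ} {a t : ℝ}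
    (hf : ∀ x, a ≤ x → HasDerivAt f (f' x) x) (hg : ∀ x, a ≤ x → HasDerivAt g (g' x) x)
    (ha : f a ≤ g a) (hle : ∀ x, a ≤ x → f' x ≤ g' x) (ht : a ≤ t) : f t ≤ g t :=
  image_le_of_deriv_right_le_deriv_boundary (b := t)
    (fun x hx => (hf x hx.1).continuousAt.continuousWithinAt)
    (fun x hx => (hf x hx.1).hasDerivWithinAt) ha
    (fun x hx => (hg x hx.1).continuousAt.continuousWithinAt)
    (fun x hx => (hg x hx.1).hasDerivWithinAt) (fun x hx => hle x hx.1) ⟨ht, le_rfl⟩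

namespace Real

lemma hasDerivAt_log_one_add {x : ℝ} (hx : 0 ≤ x) :
    HasDerivAt (fun x => log (1 + x)) (1 + x)⁻¹ x := by
  simpa using ((hasDerivAt_id x).const_add 1).log (by positivity)

lemma sub_sq_div_two_le_log_one_add {t : ℝ} (ht : 0 ≤ t) : t - t ^ 2 / 2 ≤ log (1 + t) := by
  refine le_of_hasDerivAt_le_of_le (f := fun x => x - x ^ 2 / 2) (f' := fun x => 1 - x)
    (fun x _ => ?_) (fun x hx => hasDerivAt_log_one_add hx) (by simp) (fun x hx => ?_) ht
  · exact ((hasDerivAt_id' x).fun_sub ((hasDerivAt_pow 2 x).div_const 2)).congr_deriv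
      (by norm_num)
  · rw [← one_div, le_div_iff₀ (by positivity)]
    nlinarith

lemma log_one_add_le_div_add_sq_div_two {t : ℝ} (ht : 0 ≤ t) :
    log (1 + t) ≤ t / (1 + t) + t ^ 2 / 2 := by
  refine le_of_hasDerivAt_le_of_le (g := fun x => x / (1 + x) + x ^ 2 / 2)
    (g' := fun x => ((1 + x) ^ 2)⁻¹ + x)
    (fun x hx => hasDerivAt_log_one_add hx) (fun x hx => ?_) (by simp) (fun x hx => ?_) ht
  · refine (((hasDerivAt_id' x).fun_div ((hasDerivAt_id' x).const_add 1) (by positivity)).fun_add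
      ((hasDerivAt_pow 2 x).div_const 2)).congr_deriv ?_
    field_simp
    ring
  · rw [← sub_nonneg]
    have : ((1 + x) ^ 2)⁻¹ + x - (1 + x)⁻¹ = x ^ 2 * (2 + x) / (1 + x) ^ 2 := by
      field_simp; ring
    rw [this]
    positivity

lemma rpow_neg_two_eq_inv_sq (y : ℝ) : y ^ (-2 : ℝ) = y⁻¹ ^ 2 := by
  rw [show (-2 : ℝ) = ((-2 : ℤ) : ℝ) by norm_num, rpow_intCast, zpow_neg, inv_pow]
  norm_cast

section Affine

variable {b c y : ℝ}

lemma log_add_mul_eq (hb : 0 ≤ b) (hc : 0 < c) (hy : 0 < y) :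
    log (b + c * y) = log c + log y + log (1 + b / c * y⁻¹) := by
  rw [← log_mul hc.ne' hy.ne', ← log_mul (by positivity) (by positivity)]
  congr 1
  field_simp
  ring

lemma log_sub_log_add_mul_le (hb : 0 ≤ b) (hc : 0 < c) (hy : 0 < y) :
    log y - log (b + c * y) ≤ -log c - b / c * y⁻¹ + (b / c) ^ 2 / 2 * y⁻¹ ^ 2 := by
  have := sub_sq_div_two_le_log_one_add (t := b / c * y⁻¹) (by positivity)
  rw [log_add_mul_eq hb hc hy]
  linarith

lemma abs_log_sub_log_add_mul_le (hb : 0 ≤ b) (hc : 0 < c) (hy : 0 < y) :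
    |log y - log (b + c * y)| ≤ |log c| + b / c * y⁻¹ := by
  have h₀ : 0 ≤ log (1 + b / c * y⁻¹) := log_nonneg (by simp; positivity)
  have h₁ := log_le_sub_one_of_pos (x := 1 + b / c * y⁻¹) (by positivity)
  rw [log_add_mul_eq hb hc hy, abs_le]
  constructor <;> linarith [neg_abs_le (log c), le_abs_self (log c)]

end Affine

end Real

lemma integrable_log_sub_log_add_mul {μ : Measure ℝ} [IsFiniteMeasure μ] {b c : ℝ}
    (hpos : ∀ᵐ y ∂μ, 0 < y) (hinv : Integrable (fun y => y⁻¹) μ) (hb : 0 ≤ b) (hc : 0 < c) :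
    Integrable (fun y => log y - log (b + c * y)) μ := by
  refine ((integrable_const |log c|).add (hinv.const_mul (b / c))).mono'
    (Measurable.aestronglyMeasurable (by fun_prop)) ?_
  filter_upwards [hpos] with y hy
  exact abs_log_sub_log_add_mul_le hb hc hy

lemma MeasurableEquiv.map_withDensity {α β : Type*} [MeasurableSpace α] [MeasurableSpace β]
    (e : α ≃ᵐ β) (μ : Measure α) (g : α → ℝ≥0∞) :
    (μ.withDensity g).map e = (μ.map e).withDensity (g ∘ e.symm) := by
  ext s hs
  rw [Measure.map_apply e.measurable hs, withDensity_apply _ (e.measurable hs),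
    withDensity_apply _ hs, e.restrict_map, lintegral_map_equiv]
  simp

lemma map_add_mul_withDensity_volume (f : ℝ → ℝ≥0∞) (b : ℝ) {c : ℝ} (hc : 0 < c) :
    (volume.withDensity f).map (fun y => b + c * y)
      = volume.withDensity fun x => ENNReal.ofReal c⁻¹ * f ((x - b) / c) := by
  let e : ℝ ≃ᵐ ℝ := (MeasurableEquiv.mulLeft₀ c hc.ne').trans (MeasurableEquiv.addLeft b)
  have he : (e : ℝ → ℝ) = (fun x => b + x) ∘ (fun y => c * y) := rfl
  have hsymm : ∀ x, e.symm x = (x - b) / c := fun x => by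
    simp [e]; ring
  have hvol : volume.map e = ENNReal.ofReal c⁻¹ • volume := by
    rw [he, ← Measure.map_map (measurable_const_add b) (measurable_const_mul c),
      Real.map_volume_mul_left hc.ne', Measure.map_smul, map_add_left_eq_self,
      abs_of_pos (inv_pos.mpr hc)]
  change (volume.withDensity f).map e = _
  rw [e.map_withDensity, hvol, withDensity_smul_measure,
    ← withDensity_smul' _ _ ENNReal.ofReal_ne_top]
  congr with x
  simp [hsymm]

lemma withDensity_volume_eq_restrict_Ioi {f : ℝ → ℝ≥0∞} (hf : ∀ x < 0, f x = 0) :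
    volume.withDensity f = (volume.restrict (Ioi 0)).withDensity f := by
  rw [← withDensity_indicator measurableSet_Ioi]
  refine withDensity_congr_ae ?_
  filter_upwards [Measure.ae_ne volume 0] with x hx
  rcases hx.lt_or_gt with hx | hx
  · simp [hf x hx, hx.not_gt]
  · simp [hx]

lemma klDiv_withDensity {μ : Measure ℝ} [SigmaFinite μ] {p q : ℝ → ℝ≥0∞}
    (hp : Measurable p) (hq : Measurable q) (hp_top : ∀ᵐ x ∂μ, p x ≠ ∞)
    (hq_zero : ∀ᵐ x ∂μ, q x ≠ 0) (hq_top : ∀ᵐ x ∂μ, q x ≠ ∞) :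
    klDiv (μ.withDensity p) (μ.withDensity q)
      = ∫ x, log ((p x).toReal / (q x).toReal) ∂μ.withDensity p := by
  have := SigmaFinite.withDensity_of_ne_top hp_top
  have hrn : (μ.withDensity p).rnDeriv (μ.withDensity q) =ᵐ[μ] fun x => (q x)⁻¹ * p x := by
    filter_upwards [Measure.rnDeriv_withDensity_right (μ.withDensity p) μ hq.aemeasurable
      hq_zero hq_top, Measure.rnDeriv_withDensity μ hp] with x hx₁ hx₂
    rw [hx₁, hx₂]
  refine integral_congr_ae ?_
  filter_upwards [(withDensity_absolutelyContinuous μ p).ae_eq hrn] with x hx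
  rw [hx, ENNReal.toReal_mul, ENNReal.toReal_inv, div_eq_inv_mul]

namespace ProbabilityTheory

variable {a r : ℝ}

@[fun_prop]
lemma measurable_gammaPDF (a r : ℝ) : Measurable (gammaPDF a r) :=
  (measurable_gammaPDFReal a r).ennreal_ofReal

lemma ae_pos_gammaMeasure (a r : ℝ) : ∀ᵐ x ∂gammaMeasure a r, 0 < x := by
  rw [gammaMeasure, ae_withDensity_iff (measurable_gammaPDF a r)]
  filter_upwards [Measure.ae_ne volume 0] with x hx hpdf
  contrapose! hpdf
  exact gammaPDF_of_neg (lt_of_le_of_ne hpdf hx)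

lemma integral_gammaMeasure (ha : 0 < a) (hr : 0 < r) (f : ℝ → ℝ) :
    ∫ x, f x ∂gammaMeasure a r = ∫ x, gammaPDFReal a r x * f x := by
  rw [gammaMeasure, integral_withDensity_eq_integral_toReal_smul
    (measurable_gammaPDF a r) (ae_of_all _ fun _ => ENNReal.ofReal_lt_top)]
  simp only [gammaPDF, ENNReal.toReal_ofReal (gammaPDFReal_nonneg ha hr _), smul_eq_mul]

lemma integrable_gammaMeasure_iff (ha : 0 < a) (hr : 0 < r) {f : ℝ → ℝ} :
    Integrable f (gammaMeasure a r) ↔ Integrable fun x => gammaPDFReal a r x * f x := by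
  rw [gammaMeasure, integrable_withDensity_iff_integrable_smul'
    (measurable_gammaPDF a r) (ae_of_all _ fun _ => ENNReal.ofReal_lt_top)]
  simp only [gammaPDF, ENNReal.toReal_ofReal (gammaPDFReal_nonneg ha hr _), smul_eq_mul]

lemma integrable_gammaPDFReal (ha : 0 < a) (hr : 0 < r) : Integrable (gammaPDFReal a r) := by
  have := isProbabilityMeasure_gammaMeasure ha hr
  simpa using (integrable_gammaMeasure_iff ha hr).1 (integrable_const (1 : ℝ))

lemma integral_gammaPDFReal (ha : 0 < a) (hr : 0 < r) : ∫ x, gammaPDFReal a r x = 1 := by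
  have := isProbabilityMeasure_gammaMeasure ha hr
  simpa using (integral_gammaMeasure ha hr fun _ => 1).symm

lemma gammaPDFReal_mul_rpow {s : ℝ} (hr : 0 < r) (has : 0 < a + s) {x : ℝ} (hx : x ≠ 0) :
    gammaPDFReal a r x * x ^ s
      = Gamma (a + s) / (Gamma a * r ^ s) * gammaPDFReal (a + s) r x := by
  rcases hx.lt_or_gt with hx | hx
  · simp [gammaPDFReal, hx.not_ge]
  have hΓ : Gamma (a + s) ≠ 0 := (Gamma_pos_of_pos has).ne'
  simp only [gammaPDFReal, if_pos hx.le, rpow_add hr, add_sub_right_comm a s 1, rpow_add hx]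
  field_simp

theorem integrable_rpow_gammaMeasure {s : ℝ} (ha : 0 < a) (hr : 0 < r) (has : 0 < a + s) :
    Integrable (fun x => x ^ s) (gammaMeasure a r) := by
  rw [integrable_gammaMeasure_iff ha hr]
  refine ((integrable_gammaPDFReal has hr).const_mul (Gamma (a + s) / (Gamma a * r ^ s))).congr ?_
  filter_upwards [Measure.ae_ne volume 0] with x hx using (gammaPDFReal_mul_rpow hr has hx).symm

theorem integral_rpow_gammaMeasure {s : ℝ} (ha : 0 < a) (hr : 0 < r) (has : 0 < a + s) :
    ∫ x, x ^ s ∂gammaMeasure a r = Gamma (a + s) / (Gamma a * r ^ s) := by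
  rw [integral_gammaMeasure ha hr, integral_congr_ae
    (by filter_upwards [Measure.ae_ne volume 0] with x hx using gammaPDFReal_mul_rpow hr has hx),
    integral_const_mul, integral_gammaPDFReal has hr, mul_one]

/-- Restricting the base measure to `(0, ∞)` makes the density of `(gammaMeasure a r).map (c * ·)`
positive almost everywhere, as `klDiv_withDensity` requires. -/
lemma map_gammaMeasure_add_mul {b c : ℝ} (hb : 0 ≤ b) (hc : 0 < c) :
    (gammaMeasure a r).map (fun y => b + c * y)
      = (volume.restrict (Ioi 0)).withDensity
          fun x => ENNReal.ofReal c⁻¹ * gammaPDF a r ((x - b) / c) := by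
  rw [gammaMeasure, map_add_mul_withDensity_volume _ _ hc]
  refine withDensity_volume_eq_restrict_Ioi fun x hx => ?_
  rw [gammaPDF_of_neg (div_neg_of_neg_of_pos (by linarith) hc), mul_zero]

lemma log_gammaPDFReal (ha : 0 < a) (hr : 0 < r) {x : ℝ} (hx : 0 < x) :
    log (gammaPDFReal a r x) = log (r ^ a / Gamma a) + (a - 1) * log x - r * x := by
  have : 0 < r ^ a / Gamma a := by have := Gamma_pos_of_pos ha; positivity
  rw [gammaPDFReal, if_pos hx.le, log_mul (by positivity) (exp_pos _).ne',
    log_mul this.ne' (rpow_pos_of_pos hx _).ne', log_rpow hx, log_exp]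
  ring

lemma toReal_ofReal_mul_gammaPDF (ha : 0 < a) (hr : 0 < r) {t : ℝ} (ht : 0 ≤ t) (x : ℝ) :
    (ENNReal.ofReal t * gammaPDF a r x).toReal = t * gammaPDFReal a r x := by
  rw [gammaPDF, ENNReal.toReal_mul, ENNReal.toReal_ofReal ht,
    ENNReal.toReal_ofReal (gammaPDFReal_nonneg ha hr x)]

lemma log_div_gammaPDFReal_affine (ha : 0 < a) (hr : 0 < r) {b c c' y : ℝ} (hb : 0 ≤ b)
    (hc : 0 < c) (hc' : 0 < c') (hy : 0 < y) :
    log (c⁻¹ * gammaPDFReal a r y / (c'⁻¹ * gammaPDFReal a r ((b + c * y) / c')))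
      = (a - 1) * (log y - log (b + c * y)) + r * ((b + c * y) / c' - y)
          + a * log c' - log c := by
  have hby : 0 < b + c * y := by positivity
  have hz : 0 < (b + c * y) / c' := by positivity
  have hpy := gammaPDFReal_pos ha hr hy
  have hpz := gammaPDFReal_pos ha hr hz
  rw [log_div (by positivity) (by positivity), log_mul (by positivity) hpy.ne',
    log_mul (by positivity) hpz.ne', log_gammaPDFReal ha hr hy, log_gammaPDFReal ha hr hz,
    log_div hby.ne' hc'.ne', log_inv, log_inv]
  ring

theorem klDiv_map_add_mul_gammaMeasure (ha : 0 < a) (hr : 0 < r) {b c c' : ℝ} (hb : 0 ≤ b)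
    (hc : 0 < c) (hc' : 0 < c') :
    klDiv ((gammaMeasure a r).map fun y => b + c * y) ((gammaMeasure a r).map fun y => c' * y)
      = ∫ y, ((a - 1) * (log y - log (b + c * y)) + r * ((b + c * y) / c' - y)
          + a * log c' - log c) ∂gammaMeasure a r := by
  have hQ := map_gammaMeasure_add_mul (a := a) (r := r) le_rfl hc'
  simp only [zero_add, sub_zero] at hQ
  have hq_zero : ∀ᵐ x ∂volume.restrict (Ioi 0),
      ENNReal.ofReal c'⁻¹ * gammaPDF a r (x / c') ≠ 0 := by
    filter_upwards [ae_restrict_mem measurableSet_Ioi] with x (hx : 0 < x)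
    simp only [gammaPDF, ne_eq, mul_eq_zero, ENNReal.ofReal_eq_zero, not_or, not_le]
    exact ⟨inv_pos.2 hc', gammaPDFReal_pos ha hr (div_pos hx hc')⟩
  have h_top : ∀ t x, ENNReal.ofReal t * gammaPDF a r x ≠ ∞ := fun _ _ =>
    ENNReal.mul_ne_top ENNReal.ofReal_ne_top ENNReal.ofReal_ne_top
  rw [map_gammaMeasure_add_mul hb hc, hQ, klDiv_withDensity (by fun_prop) (by fun_prop)
    (ae_of_all _ fun _ => h_top _ _) hq_zero (ae_of_all _ fun _ => h_top _ _),
    ← map_gammaMeasure_add_mul hb hc,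
    integral_map (by fun_prop) (Measurable.aestronglyMeasurable (by fun_prop))]
  refine integral_congr_ae ?_
  filter_upwards [ae_pos_gammaMeasure a r] with y hy
  simp only [toReal_ofReal_mul_gammaPDF ha hr (inv_nonneg.2 hc.le),
    toReal_ofReal_mul_gammaPDF ha hr (inv_nonneg.2 hc'.le), add_sub_cancel_left,
    mul_div_cancel_left₀ _ hc.ne']
  exact log_div_gammaPDFReal_affine ha hr hb hc hc' hy

section ChiSquared

variable {k : ℕ}

lemma isProbabilityMeasure_chiSquared (hk : 0 < k) : IsProbabilityMeasure (chiSquared k) :=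
  isProbabilityMeasure_gammaMeasure (by positivity) one_half_pos

lemma ae_pos_chiSquared (k : ℕ) : ∀ᵐ y ∂chiSquared k, 0 < y :=
  ae_pos_gammaMeasure _ _

lemma integrable_id_chiSquared (hk : 0 < k) : Integrable (fun y => y) (chiSquared k) := by
  have h := integrable_rpow_gammaMeasure (s := 1) (a := (k : ℝ) / 2) (r := 1 / 2)
    (by positivity) one_half_pos (by positivity)
  simp only [rpow_one] at h
  exact h

lemma integral_id_chiSquared (hk : 0 < k) : ∫ y, y ∂chiSquared k = k := by
  have hk' : (k : ℝ) / 2 ≠ 0 := by positivity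
  have h := integral_rpow_gammaMeasure (s := 1) (a := (k : ℝ) / 2) (r := 1 / 2)
    (by positivity) one_half_pos (by positivity)
  simp only [rpow_one, Gamma_add_one hk'] at h
  rw [chiSquared, h]
  field_simp [(Gamma_pos_of_pos (show (0 : ℝ) < k / 2 by positivity)).ne']

lemma integrable_inv_chiSquared (hk : 2 < k) : Integrable (fun y => y⁻¹) (chiSquared k) := by
  have hk' : (2 : ℝ) < k := by exact_mod_cast hk
  have h := integrable_rpow_gammaMeasure (s := -1) (a := (k : ℝ) / 2) (r := 1 / 2)
    (by positivity) one_half_pos (by linarith)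
  simp only [rpow_neg_one] at h
  exact h

lemma integral_inv_chiSquared (hk : 2 < k) : ∫ y, y⁻¹ ∂chiSquared k = 1 / (k - 2) := by
  have hk' : (2 : ℝ) < k := by exact_mod_cast hk
  have h := integral_rpow_gammaMeasure (s := -1) (a := (k : ℝ) / 2) (r := 1 / 2)
    (by positivity) one_half_pos (by linarith)
  have hΓ := Gamma_add_one (s := (k : ℝ) / 2 + -1) (by linarith)
  have hΓ₀ := (Gamma_pos_of_pos (show (0 : ℝ) < k / 2 + -1 by linarith)).ne'
  rw [show (k : ℝ) / 2 + -1 + 1 = k / 2 by ring] at hΓ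
  simp only [rpow_neg_one] at h
  rw [chiSquared, h, hΓ]
  generalize Gamma ((k : ℝ) / 2 + -1) = G at hΓ₀ ⊢
  have hk₂ : (k : ℝ) / 2 + -1 ≠ 0 := by linarith
  field_simp
  ring

lemma integrable_inv_sq_chiSquared (hk : 4 < k) :
    Integrable (fun y => y⁻¹ ^ 2) (chiSquared k) := by
  have hk' : (4 : ℝ) < k := by exact_mod_cast hk
  have h := integrable_rpow_gammaMeasure (s := -2) (a := (k : ℝ) / 2) (r := 1 / 2)
    (by positivity) one_half_pos (by linarith)
  simp only [rpow_neg_two_eq_inv_sq] at h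
  exact h

lemma integral_inv_sq_chiSquared (hk : 4 < k) :
    ∫ y, y⁻¹ ^ 2 ∂chiSquared k = 1 / ((k - 2) * (k - 4)) := by
  have hk' : (4 : ℝ) < k := by exact_mod_cast hk
  have h := integral_rpow_gammaMeasure (s := -2) (a := (k : ℝ) / 2) (r := 1 / 2)
    (by positivity) one_half_pos (by linarith)
  have hΓ₁ := Gamma_add_one (s := (k : ℝ) / 2 + -1) (by linarith)
  have hΓ₂ := Gamma_add_one (s := (k : ℝ) / 2 + -2) (by linarith)
  have hΓ₀ := (Gamma_pos_of_pos (show (0 : ℝ) < k / 2 + -2 by linarith)).ne'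
  rw [show (k : ℝ) / 2 + -1 + 1 = k / 2 by ring] at hΓ₁
  rw [show (k : ℝ) / 2 + -2 + 1 = k / 2 + -1 by ring] at hΓ₂
  simp only [rpow_neg_two_eq_inv_sq] at h
  rw [chiSquared, h, hΓ₁, hΓ₂]
  generalize Gamma ((k : ℝ) / 2 + -2) = G at hΓ₀ ⊢
  have hk₂ : (k : ℝ) / 2 + -1 ≠ 0 := by linarith
  have hk₄ : (k : ℝ) / 2 + -2 ≠ 0 := by linarith
  field_simp
  ring

lemma integrable_moment_combination_chiSquared (hk : 4 < k) (A B C D : ℝ) :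
    Integrable (fun y => A + B * y + C * y⁻¹ + D * y⁻¹ ^ 2) (chiSquared k) :=
  have := isProbabilityMeasure_chiSquared (by omega : 0 < k)
  (((integrable_const A).add ((integrable_id_chiSquared (by omega)).const_mul B)).add
    ((integrable_inv_chiSquared (by omega)).const_mul C)).add
    ((integrable_inv_sq_chiSquared hk).const_mul D)

lemma integral_moment_combination_chiSquared (hk : 4 < k) (A B C D : ℝ) :
    ∫ y, (A + B * y + C * y⁻¹ + D * y⁻¹ ^ 2) ∂chiSquared k
      = A + B * k + C * (1 / (k - 2)) + D * (1 / ((k - 2) * (k - 4))) := by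
  have := isProbabilityMeasure_chiSquared (by omega : 0 < k)
  have hY := integrable_id_chiSquared (by omega : 0 < k)
  have hinv := integrable_inv_chiSquared (by omega : 2 < k)
  have hAB : Integrable (fun y => A + B * y) (chiSquared k) :=
    (integrable_const A).add (hY.const_mul B)
  have hABC : Integrable (fun y => A + B * y + C * y⁻¹) (chiSquared k) :=
    hAB.add (hinv.const_mul C)
  rw [integral_add hABC ((integrable_inv_sq_chiSquared hk).const_mul D),
    integral_add hAB (hinv.const_mul C),
    integral_add (integrable_const A) (hY.const_mul B), integral_const, integral_const_mul,
    integral_const_mul, integral_const_mul, integral_id_chiSquared (by omega),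
    integral_inv_chiSquared (by omega), integral_inv_sq_chiSquared hk]
  simp

theorem klDiv_map_add_mul_chiSquared_le (hk : 4 < k) {b c c' : ℝ} (hb : 0 ≤ b)
    (hc : 0 < c) (hc' : 0 < c') :
    klDiv ((chiSquared k).map fun y => b + c * y) ((chiSquared k).map fun y => c' * y)
      ≤ k / 2 * (log c' - log c) + (b + c * k) / (2 * c') - k / 2 - b / (2 * c)
          + (b / c) ^ 2 / (4 * (k - 4)) := by
  have hk' : (4 : ℝ) < k := by exact_mod_cast hk
  have := isProbabilityMeasure_chiSquared (by omega : 0 < k)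
  have hY := integrable_id_chiSquared (by omega : 0 < k)
  have hL := integrable_log_sub_log_add_mul (ae_pos_chiSquared k)
    (integrable_inv_chiSquared (by omega)) hb hc
  calc _ = ∫ y, (((k : ℝ) / 2 - 1) * (log y - log (b + c * y)) + 1 / 2 * ((b + c * y) / c' - y)
          + k / 2 * log c' - log c) ∂chiSquared k :=
        klDiv_map_add_mul_gammaMeasure (by positivity) one_half_pos hb hc hc'
    _ ≤ ∫ y, (k / 2 * (log c' - log c) + b / (2 * c') + (c / c' - 1) / 2 * y
          + -((k : ℝ) / 2 - 1) * (b / c) * y⁻¹ + ((k : ℝ) / 2 - 1) * ((b / c) ^ 2 / 2) * y⁻¹ ^ 2)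
          ∂chiSquared k := by
        refine integral_mono_ae ((((hL.const_mul _).add (((((integrable_const b).add
          (hY.const_mul c)).div_const c').sub hY).const_mul _)).add (integrable_const _)).sub
          (integrable_const _)) (integrable_moment_combination_chiSquared hk _ _ _ _) ?_
        filter_upwards [ae_pos_chiSquared k] with y hy
        have := mul_le_mul_of_nonneg_left (log_sub_log_add_mul_le hb hc hy)
          (by linarith : (0 : ℝ) ≤ k / 2 - 1)
        linear_combination this
    _ = _ := by
        rw [integral_moment_combination_chiSquared hk]
        have : (k : ℝ) - 2 ≠ 0 := by linarith
        have : (k : ℝ) - 4 ≠ 0 := by linarith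
        field_simp
        ring

theorem klDiv_add_chiSquared_mul_chiSquared_le (ha : 0 ≤ a) (hr : 0 ≤ r) (hk : 4 < k) :
    klDiv ((chiSquared k).map fun y => a + y) ((chiSquared k).map fun y => (1 + r) * y)
      ≤ a ^ 2 / (2 * k - 8) + k * r ^ 2 / 4 + a * r / 2 := by
  have hk' : (4 : ℝ) < k := by exact_mod_cast hk
  have hbound := klDiv_map_add_mul_chiSquared_le hk ha one_pos (by positivity : 0 < 1 + r)
  simp only [one_mul] at hbound
  have hrewrite : (k : ℝ) / 2 * (log (1 + r) - log 1) + (a + k) / (2 * (1 + r)) - k / 2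
      - a / (2 * 1) + (a / 1) ^ 2 / (4 * (k - 4))
      = k / 2 * (log (1 + r) - r / (1 + r)) - a * r / (2 * (1 + r)) + a ^ 2 / (4 * (k - 4)) := by
    have : (k : ℝ) - 4 ≠ 0 := by linarith
    have : 1 + r ≠ 0 := by positivity
    rw [log_one]
    field_simp
    ring
  have hlog : k / 2 * (log (1 + r) - r / (1 + r)) ≤ k / 2 * (r ^ 2 / 2) := by
    gcongr
    linarith [log_one_add_le_div_add_sq_div_two hr]
  have hsq : a ^ 2 / (4 * (k - 4)) ≤ a ^ 2 / (2 * k - 8) :=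
    div_le_div_of_nonneg_left (by positivity) (by linarith) (by linarith)
  have : 0 ≤ a * r / (2 * (1 + r)) := by positivity
  have : 0 ≤ a * r / 2 := by positivity
  linarith

theorem klDiv_add_mul_chiSquared_chiSquared_le (ha : 0 ≤ a) (hr : 0 ≤ r) (hk : 4 < k) :
    klDiv ((chiSquared k).map fun y => a + (1 + r) * y) (chiSquared k)
      ≤ a ^ 2 / (2 * k - 8) + k * r ^ 2 / 4 + a * r / 2 := by
  have hk' : (4 : ℝ) < k := by exact_mod_cast hk
  have hbound := klDiv_map_add_mul_chiSquared_le hk ha (by positivity : 0 < 1 + r) one_pos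
  simp only [one_mul, Measure.map_id'] at hbound
  have hrewrite : (k : ℝ) / 2 * (log 1 - log (1 + r)) + (a + (1 + r) * k) / (2 * 1) - k / 2
      - a / (2 * (1 + r)) + (a / (1 + r)) ^ 2 / (4 * (k - 4))
      = k / 2 * (r - log (1 + r)) + a / 2 * (r / (1 + r)) + (a / (1 + r)) ^ 2 / (4 * (k - 4)) := by
    have : 1 + r ≠ 0 := by positivity
    rw [log_one]
    field_simp
    ring
  have hlog : k / 2 * (r - log (1 + r)) ≤ k / 2 * (r ^ 2 / 2) := by
    gcongr
    linarith [sub_sq_div_two_le_log_one_add hr]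
  have hfrac : a / 2 * (r / (1 + r)) ≤ a / 2 * r := by
    gcongr
    exact div_le_self hr (by linarith)
  have hsq : (a / (1 + r)) ^ 2 / (4 * (k - 4)) ≤ a ^ 2 / (2 * k - 8) :=
    calc _ ≤ a ^ 2 / (4 * (k - 4)) := by gcongr; exact div_le_self ha (by linarith)
      _ ≤ a ^ 2 / (2 * k - 8) :=
        div_le_div_of_nonneg_left (by positivity) (by linarith) (by linarith)
  linarith

end ChiSquared

end ProbabilityTheory

/-- For a ≥ 0, r ≥ 0, k > 4 and Y ~ χ²(k), both KL(a + Y ‖ (1+r)Y) and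
KL(a + (1+r)Y ‖ Y) are at most a²/(2k-8) + kr²/4 + ar/2. -/
theorem stmt_5 (a r : ℝ) (ha : 0 ≤ a) (hr : 0 ≤ r) (k : ℕ) (hk : 4 < k) :
    max (klDiv ((chiSquared k).map fun y => a + y) ((chiSquared k).map fun y => (1 + r) * y))
        (klDiv ((chiSquared k).map fun y => a + (1 + r) * y) (chiSquared k))
      ≤ a ^ 2 / (2 * (k : ℝ) - 8) + (k : ℝ) * r ^ 2 / 4 + a * r / 2 :=
  max_le (klDiv_add_chiSquared_mul_chiSquared_le ha hr hk)
    (klDiv_add_mul_chiSquared_chiSquared_le ha hr hk)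
end

section
/- Let Z ~ N(0, I_d) and let Σ be the diagonal matrix with k entries equal to 1+σ² and d-k entries equal to 1, where k ≥ 3 and σ ≥ 0. Then E[(ZᵀΣZ)²/(ZᵀΣ²Z)] ≤ 8(k+4) + 4(d-k+3)²/((1+σ²)²(k-2)). -/
/-!
Write `A = ‖Z₁‖²`, `B = ‖Z₂‖²` and `c = 1 + σ²`, so that the integrand is
`(c A + B)² / (c² A + B) ≤ 2 A + 2 B² / (c² A)`. Here `E[A] = k`, and since `A` and `B` are
independent, `E[B² / A] = E[B²] E[1 / A]`. The Gaussian moments `E[Z²] = 1`, `E[Z⁴] = 3` give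
`E[B²] = m (m + 2)` with `m = d - k`, while `1 / A = ∫₀^∞ e^{-s A} ds` and
`E[e^{-s A}] = (1 + 2 s)^{-k/2}` give `E[1 / A] = 1 / (k - 2)`. Altogether the expectation is at
most `2 k + 2 m (m + 2) / (c² (k - 2))`.
-/

open MeasureTheory ProbabilityTheory Real Set Filter Topology
open scoped ENNReal Finset

lemma lintegral_exp_neg_mul_sq_gaussianReal {b : ℝ} (hb : -(1 / 2) < b) :
    ∫⁻ x, ENNReal.ofReal (rexp (-(b * x ^ 2))) ∂gaussianReal 0 1
      = ENNReal.ofReal ((2 * b + 1) ^ (-(1 / 2 : ℝ))) := by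
  have hb' : 0 < b + 1 / 2 := by linarith
  have hdensity (x : ℝ) : gaussianPDF 0 1 x * ENNReal.ofReal (rexp (-(b * x ^ 2)))
      = ENNReal.ofReal ((√(2 * π))⁻¹ * rexp (-(b + 1 / 2) * x ^ 2)) := by
    rw [gaussianPDF, ← ENNReal.ofReal_mul (gaussianPDFReal_nonneg _ _ _), gaussianPDFReal]
    congr 1
    simp only [NNReal.coe_one, mul_one, sub_zero, mul_assoc, ← Real.exp_add]
    ring_nf
  rw [gaussianReal_of_var_ne_zero 0 one_ne_zero,
    lintegral_withDensity_eq_lintegral_mul _ (measurable_gaussianPDF _ _) (by fun_prop)]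
  simp only [Pi.mul_apply, hdensity]
  rw [← ofReal_integral_eq_lintegral_ofReal ((integrable_exp_neg_mul_sq hb').const_mul _)
    (ae_of_all _ fun x => by positivity), integral_const_mul, integral_gaussian,
    Real.rpow_neg (by linarith), ← Real.sqrt_eq_rpow, Real.sqrt_div' _ hb'.le,
    Real.sqrt_mul' _ (by positivity : (0 : ℝ) ≤ π)]
  congr 1
  rw [show 2 * b + 1 = 2 * (b + 1 / 2) by ring, Real.sqrt_mul zero_le_two]
  have : 0 < √π := Real.sqrt_pos.2 Real.pi_pos
  have : 0 < √(b + 1 / 2) := Real.sqrt_pos.2 hb'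
  field_simp

lemma deriv_mul_exp_sq_div_two {p p' : ℝ → ℝ} (hp : ∀ t, HasDerivAt p (p' t) t) :
    deriv (fun t => p t * rexp (t ^ 2 / 2)) = fun t => (p' t + t * p t) * rexp (t ^ 2 / 2) := by
  funext t
  have he : HasDerivAt (fun t : ℝ => rexp (t ^ 2 / 2)) (rexp (t ^ 2 / 2) * t) t := by
    convert ((hasDerivAt_pow 2 t).div_const 2).exp using 1
    push_cast
    ring
  rw [((hp t).fun_mul he).deriv]
  ring

lemma iteratedDeriv_two_exp_sq_div_two :
    iteratedDeriv 2 (fun t : ℝ => rexp (t ^ 2 / 2)) = fun t => (1 + t ^ 2) * rexp (t ^ 2 / 2) := by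
  have d1 : deriv (fun t : ℝ => rexp (t ^ 2 / 2)) = fun t => t * rexp (t ^ 2 / 2) := by
    simpa using deriv_mul_exp_sq_div_two fun t => hasDerivAt_const t (1 : ℝ)
  rw [iteratedDeriv_succ, iteratedDeriv_one, d1]
  simpa [sq] using deriv_mul_exp_sq_div_two fun t => hasDerivAt_id' t

lemma iteratedDeriv_four_exp_sq_div_two :
    iteratedDeriv 4 (fun t : ℝ => rexp (t ^ 2 / 2))
      = fun t => (3 + 6 * t ^ 2 + t ^ 4) * rexp (t ^ 2 / 2) := by
  have d3 : deriv (fun t : ℝ => (1 + t ^ 2) * rexp (t ^ 2 / 2))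
      = fun t => (3 * t + t ^ 3) * rexp (t ^ 2 / 2) := by
    rw [deriv_mul_exp_sq_div_two fun t => (hasDerivAt_pow 2 t).const_add 1]
    funext t
    push_cast
    ring
  rw [iteratedDeriv_succ, iteratedDeriv_succ, iteratedDeriv_two_exp_sq_div_two, d3,
    deriv_mul_exp_sq_div_two (p := fun t => 3 * t + t ^ 3)
      fun t => ((hasDerivAt_id' t).const_mul 3).add (hasDerivAt_pow 3 t)]
  funext t
  push_cast
  ring

/-- `exp (t ^ 2 / 2)` is the moment generating function of the standard Gaussian. -/
lemma lintegral_ofReal_pow_gaussianReal {n : ℕ} (hn : Even n) :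
    ∫⁻ x, ENNReal.ofReal (x ^ n) ∂gaussianReal 0 1
      = ENNReal.ofReal (iteratedDeriv n (fun t => rexp (t ^ 2 / 2)) 0) := by
  have h0 : 0 ∈ interior (integrableExpSet (fun x : ℝ => x) (gaussianReal 0 1)) := by
    simp [integrableExpSet_fun_id_gaussianReal]
  have hmoment := iteratedDeriv_mgf_zero h0 n
  simp only [mgf_fun_id_gaussianReal, zero_mul, zero_add, NNReal.coe_one, one_mul,
    Pi.pow_apply] at hmoment
  rw [hmoment, ofReal_integral_eq_lintegral_ofReal
    (integrable_pow_of_mem_interior_integrableExpSet h0 n) (ae_of_all _ fun x => hn.pow_nonneg x)]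

lemma lintegral_sq_gaussianReal : ∫⁻ x, ENNReal.ofReal (x ^ 2) ∂gaussianReal 0 1 = 1 := by
  simp [lintegral_ofReal_pow_gaussianReal even_two, iteratedDeriv_two_exp_sq_div_two]

lemma lintegral_pow_four_gaussianReal : ∫⁻ x, ENNReal.ofReal (x ^ 4) ∂gaussianReal 0 1 = 3 := by
  simp [lintegral_ofReal_pow_gaussianReal (by decide : Even 4), iteratedDeriv_four_exp_sq_div_two]

lemma lintegral_Ioi_exp_neg_mul {a : ℝ} (ha : 0 ≤ a) :
    ∫⁻ s in Ioi 0, ENNReal.ofReal (rexp (-(s * a))) = (ENNReal.ofReal a)⁻¹ := by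
  rcases ha.eq_or_lt with rfl | ha
  · simp
  simp_rw [mul_comm _ a, ← neg_mul]
  rw [← ofReal_integral_eq_lintegral_ofReal (exp_neg_integrableOn_Ioi 0 ha)
    (ae_of_all _ fun s => (exp_pos _).le), integral_exp_mul_Ioi (by linarith), mul_zero,
    exp_zero, neg_div_neg_eq, one_div, ENNReal.ofReal_inv_of_pos ha]

lemma lintegral_Ioi_rpow_two_mul_add_one {p : ℝ} (hp : p < -1) :
    ∫⁻ s in Ioi 0, ENNReal.ofReal ((2 * s + 1) ^ p) = ENNReal.ofReal (-1 / (2 * (p + 1))) := by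
  have hp1 : p + 1 ≠ 0 := by linarith
  set F : ℝ → ℝ := fun s => (2 * s + 1) ^ (p + 1) / (2 * (p + 1))
  have hF : ∀ s ∈ Ici (0 : ℝ), HasDerivAt F ((2 * s + 1) ^ p) s := by
    intro s hs
    have hpos : 0 < 2 * s + 1 := by linarith [mem_Ici.1 hs]
    refine (((((hasDerivAt_id' s).const_mul 2).add_const 1).rpow_const
      (p := p + 1) (Or.inl hpos.ne')).div_const (2 * (p + 1))).congr_deriv ?_
    rw [add_sub_cancel_right]
    field_simp
  have hlim : Tendsto F atTop (𝓝 0) := by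
    have := (tendsto_rpow_neg_atTop (y := -(p + 1)) (by linarith)).comp
      (tendsto_atTop_add_const_right _ 1 (tendsto_id.const_mul_atTop two_pos))
    simpa [F, neg_neg] using this.div_const (2 * (p + 1))
  have hnonneg : ∀ s ∈ Ioi (0 : ℝ), 0 ≤ (2 * s + 1) ^ p := fun s hs =>
    Real.rpow_nonneg (by linarith [mem_Ioi.1 hs]) _
  rw [← ofReal_integral_eq_lintegral_ofReal (integrableOn_Ioi_deriv_of_nonneg' hF hnonneg hlim)
    ((ae_restrict_iff' measurableSet_Ioi).2 (ae_of_all _ hnonneg)),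
    integral_Ioi_of_hasDerivAt_of_nonneg' hF hnonneg hlim]
  simp only [F, zero_sub, mul_zero, zero_add, Real.one_rpow, neg_div]

section SqNormOn

variable {ι : Type*}

def sqNormOn (S : Finset ι) (x : ι → ℝ) : ℝ := ∑ i ∈ S, x i ^ 2

@[fun_prop]
lemma measurable_sqNormOn (S : Finset ι) : Measurable (sqNormOn S) := by
  unfold sqNormOn
  fun_prop

lemma sqNormOn_nonneg (S : Finset ι) (x : ι → ℝ) : 0 ≤ sqNormOn S x :=
  Finset.sum_nonneg fun _ _ => sq_nonneg _

lemma sum_ite_mul_sq [Fintype ι] (p : ι → Prop) [DecidablePred p] (a : ℝ) (x : ι → ℝ) :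
    ∑ i, (if p i then a else 1) * x i ^ 2 = a * sqNormOn {i | p i} x + sqNormOn {i | ¬ p i} x := by
  simp only [ite_mul, one_mul, Finset.sum_ite, sqNormOn, Finset.mul_sum]

variable [Fintype ι]

lemma indepFun_sqNormOn {μ : ι → Measure ℝ} [∀ i, IsProbabilityMeasure (μ i)]
    {S T : Finset ι} (hST : Disjoint S T) :
    IndepFun (sqNormOn S) (sqNormOn T) (Measure.pi μ) := by
  have hcoord := iIndepFun_pi (μ := μ) (X := fun _ => id) fun _ => aemeasurable_id
  have h := (hcoord.indepFun_finset S T hST fun i => measurable_pi_apply i).comp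
    (φ := fun y : S → ℝ => ∑ i, y i ^ 2) (ψ := fun y : T → ℝ => ∑ i, y i ^ 2)
    (by fun_prop) (by fun_prop)
  convert h using 1 <;> funext x <;> exact (Finset.sum_coe_sort _ fun i => x i ^ 2).symm

local notation "𝒩" => Measure.pi fun _ : ι => gaussianReal 0 1

lemma lintegral_exp_neg_mul_sqNormOn (S : Finset ι) {s : ℝ} (hs : -(1 / 2) < s) :
    ∫⁻ x, ENNReal.ofReal (rexp (-(s * sqNormOn S x))) ∂𝒩
      = ENNReal.ofReal ((2 * s + 1) ^ (-(S.card / 2 : ℝ))) := by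
  have hprod (x : ι → ℝ) : ENNReal.ofReal (rexp (-(s * sqNormOn S x)))
      = ∏ i ∈ S, ENNReal.ofReal (rexp (-(s * x i ^ 2))) := by
    rw [sqNormOn, Finset.mul_sum, ← Finset.sum_neg_distrib, Real.exp_sum,
      ENNReal.ofReal_prod_of_nonneg fun _ _ => (exp_pos _).le]
  have hindep := iIndepFun_pi (μ := fun _ : ι => gaussianReal 0 1)
    (X := fun _ t => ENNReal.ofReal (rexp (-(s * t ^ 2)))) fun _ => by fun_prop
  simp_rw [hprod]
  rw [lintegral_prod_eq_prod_lintegral_of_indepFun S _ hindep fun _ => by fun_prop]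
  simp_rw [(measurePreserving_eval (fun _ : ι => gaussianReal 0 1) _).lintegral_comp
    (f := fun t => ENNReal.ofReal (rexp (-(s * t ^ 2)))) (by fun_prop)]
  rw [lintegral_exp_neg_mul_sq_gaussianReal hs, Finset.prod_const,
    ← ENNReal.ofReal_pow (Real.rpow_nonneg (by linarith) _), ← Real.rpow_natCast,
    ← Real.rpow_mul (by linarith)]
  ring_nf

lemma lintegral_sqNormOn (S : Finset ι) :
    ∫⁻ x, ENNReal.ofReal (sqNormOn S x) ∂𝒩 = S.card := by
  simp_rw [sqNormOn, ENNReal.ofReal_sum_of_nonneg fun _ _ => sq_nonneg _]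
  rw [lintegral_finsetSum _ fun _ _ => by fun_prop]
  simp_rw [(measurePreserving_eval (fun _ : ι => gaussianReal 0 1) _).lintegral_comp
    (f := fun t => ENNReal.ofReal (t ^ 2)) (by fun_prop), lintegral_sq_gaussianReal]
  simp

lemma lintegral_sqNormOn_sq (S : Finset ι) :
    ∫⁻ x, ENNReal.ofReal (sqNormOn S x) ^ 2 ∂𝒩 = S.card * (S.card + 2) := by
  classical
  have heval (f : ℝ → ℝ≥0∞) (hf : Measurable f) (l : ι) :
      ∫⁻ x : ι → ℝ, f (x l) ∂𝒩 = ∫⁻ t, f t ∂gaussianReal 0 1 :=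
    (measurePreserving_eval _ l).lintegral_comp hf
  have hcoord := iIndepFun_pi (μ := fun _ : ι => gaussianReal 0 1)
    (X := fun _ t => ENNReal.ofReal (t ^ 2)) fun _ => by fun_prop
  have hterm (i j : ι) : ∫⁻ x, ENNReal.ofReal (x i ^ 2) * ENNReal.ofReal (x j ^ 2) ∂𝒩
      = 1 + if i = j then 2 else 0 := by
    split_ifs with hij
    · subst hij
      simp_rw [← ENNReal.ofReal_mul (sq_nonneg _), ← pow_add]
      rw [heval (fun t => ENNReal.ofReal (t ^ (2 + 2))) (by fun_prop)]
      norm_num [lintegral_pow_four_gaussianReal]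
    · rw [lintegral_mul_eq_lintegral_mul_lintegral_of_indepFun''
        (by fun_prop : Measurable fun x : ι → ℝ => ENNReal.ofReal (x i ^ 2)).aemeasurable
        (by fun_prop : Measurable fun x : ι → ℝ => ENNReal.ofReal (x j ^ 2)).aemeasurable
        (hcoord.indepFun hij), heval (fun t => ENNReal.ofReal (t ^ 2)) (by fun_prop),
        heval (fun t => ENNReal.ofReal (t ^ 2)) (by fun_prop), lintegral_sq_gaussianReal]
      simp
  calc ∫⁻ x, ENNReal.ofReal (sqNormOn S x) ^ 2 ∂𝒩
      = ∑ i ∈ S, ∑ j ∈ S, ∫⁻ x, ENNReal.ofReal (x i ^ 2) * ENNReal.ofReal (x j ^ 2) ∂𝒩 := by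
        simp_rw [sqNormOn, ENNReal.ofReal_sum_of_nonneg fun _ _ => sq_nonneg _,
          sq (Finset.sum _ _), Finset.sum_mul_sum]
        rw [lintegral_finsetSum _ fun _ _ => by fun_prop]
        exact Finset.sum_congr rfl fun i _ => lintegral_finsetSum _ fun _ _ => by fun_prop
    _ = ∑ i ∈ S, ∑ j ∈ S, (1 + if i = j then 2 else 0) := by simp_rw [hterm]
    _ = S.card * (S.card + 2) := by
        simp [Finset.sum_add_distrib, Finset.sum_ite_eq]
        ring

lemma lintegral_inv_sqNormOn {S : Finset ι} (hS : 3 ≤ S.card) :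
    ∫⁻ x, (ENNReal.ofReal (sqNormOn S x))⁻¹ ∂𝒩
      = ENNReal.ofReal (((S.card : ℝ) - 2)⁻¹) := by
  have hS' : (3 : ℝ) ≤ S.card := by exact_mod_cast hS
  simp_rw [← lintegral_Ioi_exp_neg_mul (sqNormOn_nonneg S _)]
  rw [lintegral_lintegral_swap (by fun_prop),
    setLIntegral_congr_fun measurableSet_Ioi
      (g := fun s => ENNReal.ofReal ((2 * s + 1) ^ (-(S.card / 2 : ℝ)))) fun s hs =>
        lintegral_exp_neg_mul_sqNormOn S (by linarith [mem_Ioi.1 hs] : -(1 / 2) < s),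
    lintegral_Ioi_rpow_two_mul_add_one (by linarith),
    show 2 * (-(S.card / 2 : ℝ) + 1) = -(S.card - 2) by ring, div_neg, neg_div, neg_neg, one_div]

lemma lintegral_sqNormOn_sq_mul_inv {S T : Finset ι} (hST : Disjoint T S) (hS : 3 ≤ S.card) :
    ∫⁻ x, ENNReal.ofReal (sqNormOn T x) ^ 2 * (ENNReal.ofReal (sqNormOn S x))⁻¹ ∂𝒩
      = T.card * (T.card + 2) * ENNReal.ofReal (((S.card : ℝ) - 2)⁻¹) := by
  rw [lintegral_mul_eq_lintegral_mul_lintegral_of_indepFun''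
    (f := fun x => ENNReal.ofReal (sqNormOn T x) ^ 2)
    (g := fun x => (ENNReal.ofReal (sqNormOn S x))⁻¹) (by fun_prop) (by fun_prop)
    ((indepFun_sqNormOn hST).comp (φ := fun t => ENNReal.ofReal t ^ 2)
      (ψ := fun t => (ENNReal.ofReal t)⁻¹) (by fun_prop) (by fun_prop)),
    lintegral_sqNormOn_sq, lintegral_inv_sqNormOn hS]

/-- Expand `(c a + b)² ≤ 2 c² a² + 2 b²` and divide each term by the part of `c² a + b` it
dominates. For `a = 0 < b` the right-hand side is `∞`. -/
lemma ofReal_sq_div_le {a b c : ℝ} (ha : 0 ≤ a) (hb : 0 ≤ b) (hc : c ≠ 0) :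
    ENNReal.ofReal ((c * a + b) ^ 2 / (c ^ 2 * a + b))
      ≤ 2 * ENNReal.ofReal a
        + 2 * (ENNReal.ofReal (c ^ 2))⁻¹ * (ENNReal.ofReal b ^ 2 * (ENNReal.ofReal a)⁻¹) := by
  rcases ha.eq_or_lt with rfl | ha
  · rcases hb.eq_or_lt with rfl | hb
    · simp
    · simp [hb]
  have hc2 : 0 < c ^ 2 := by positivity
  have hreal : (c * a + b) ^ 2 / (c ^ 2 * a + b) ≤ 2 * a + 2 * (c ^ 2)⁻¹ * (b ^ 2 * a⁻¹) :=
    calc (c * a + b) ^ 2 / (c ^ 2 * a + b)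
        ≤ (2 * (c ^ 2 * a) * a + 2 * b ^ 2) / (c ^ 2 * a + b) := by
          gcongr
          nlinarith [sq_nonneg (c * a - b)]
      _ = 2 * (c ^ 2 * a) * a / (c ^ 2 * a + b) + 2 * b ^ 2 / (c ^ 2 * a + b) := add_div _ _ _
      _ ≤ 2 * (c ^ 2 * a) * a / (c ^ 2 * a) + 2 * b ^ 2 / (c ^ 2 * a) := by
          gcongr <;> linarith
      _ = 2 * a + 2 * (c ^ 2)⁻¹ * (b ^ 2 * a⁻¹) := by field_simp
  refine (ENNReal.ofReal_le_ofReal hreal).trans_eq ?_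
  rw [ENNReal.ofReal_add (by positivity) (by positivity), ENNReal.ofReal_mul zero_le_two,
    ENNReal.ofReal_mul (by positivity), ENNReal.ofReal_mul zero_le_two,
    ENNReal.ofReal_inv_of_pos hc2, ENNReal.ofReal_mul (by positivity), ENNReal.ofReal_pow hb,
    ENNReal.ofReal_inv_of_pos ha, ENNReal.ofReal_ofNat]

lemma integral_sq_div_sqNormOn_le {S T : Finset ι} (hST : Disjoint T S) (hS : 3 ≤ S.card)
    {c : ℝ} (hc : c ≠ 0) :
    ∫ x, (c * sqNormOn S x + sqNormOn T x) ^ 2 / (c ^ 2 * sqNormOn S x + sqNormOn T x) ∂𝒩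
      ≤ 2 * S.card + 2 * (c ^ 2)⁻¹ * (T.card * (T.card + 2) * ((S.card : ℝ) - 2)⁻¹) := by
  have hS2 : (0 : ℝ) < S.card - 2 := by
    have : (3 : ℝ) ≤ S.card := by exact_mod_cast hS
    linarith
  have hA := sqNormOn_nonneg S
  have hB := sqNormOn_nonneg T
  rw [integral_eq_lintegral_of_nonneg_ae
    (ae_of_all _ fun x => div_nonneg (sq_nonneg _) (by have := hA x; have := hB x; positivity))
    (by fun_prop : Measurable _).aestronglyMeasurable]
  refine ENNReal.toReal_le_of_le_ofReal (by positivity) ?_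
  calc _ ≤ ∫⁻ x, 2 * ENNReal.ofReal (sqNormOn S x) + 2 * (ENNReal.ofReal (c ^ 2))⁻¹
          * (ENNReal.ofReal (sqNormOn T x) ^ 2 * (ENNReal.ofReal (sqNormOn S x))⁻¹) ∂𝒩 :=
        lintegral_mono fun x => ofReal_sq_div_le (hA x) (hB x) hc
    _ = 2 * S.card + 2 * (ENNReal.ofReal (c ^ 2))⁻¹
          * (T.card * (T.card + 2) * ENNReal.ofReal (((S.card : ℝ) - 2)⁻¹)) := by
        rw [lintegral_add_left (by fun_prop), lintegral_const_mul _ (by fun_prop),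
          lintegral_const_mul _ (by fun_prop), lintegral_sqNormOn,
          lintegral_sqNormOn_sq_mul_inv hST hS]
    _ = _ := by
        rw [ENNReal.ofReal_add (by positivity) (by positivity), ENNReal.ofReal_mul zero_le_two,
          ENNReal.ofReal_natCast, ENNReal.ofReal_mul (by positivity),
          ENNReal.ofReal_mul zero_le_two, ENNReal.ofReal_inv_of_pos (by positivity : 0 < c ^ 2),
          ENNReal.ofReal_mul (by positivity), ENNReal.ofReal_mul (by positivity),
          ENNReal.ofReal_add (by positivity) zero_le_two, ENNReal.ofReal_natCast,
          ENNReal.ofReal_ofNat]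

end SqNormOn

lemma Fin.card_filter_not_val_lt {d k : ℕ} : #{i : Fin d | ¬ (i : ℕ) < k} = d - k := by
  have := Finset.card_filter_add_card_filter_not (s := Finset.univ) fun i : Fin d => (i : ℕ) < k
  rw [Finset.card_univ, Fintype.card_fin, Fin.card_filter_val_lt] at this
  omega

theorem stmt_17_general (d k : ℕ) (hk3 : 3 ≤ k) (hkd : k ≤ d) (σ : ℝ) :
    ∫ z : Fin d → ℝ,
        (∑ i : Fin d, (if (i : ℕ) < k then 1 + σ ^ 2 else 1) * z i ^ 2) ^ 2
          / (∑ i : Fin d, (if (i : ℕ) < k then 1 + σ ^ 2 else 1) ^ 2 * z i ^ 2)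
        ∂(Measure.pi fun _ : Fin d => gaussianReal 0 1)
      ≤ 8 * ((k : ℝ) + 4) + 4 * ((d : ℝ) - k + 3) ^ 2 / ((1 + σ ^ 2) ^ 2 * ((k : ℝ) - 2)) := by
  have hS : #{i : Fin d | (i : ℕ) < k} = k := by simp [Fin.card_filter_val_lt, hkd]
  have hk2 : (0 : ℝ) < k - 2 := by
    have : (3 : ℝ) ≤ k := by exact_mod_cast hk3
    linarith
  have hm : (0 : ℝ) ≤ d - k := sub_nonneg.2 (by exact_mod_cast hkd)
  simp only [ite_pow, one_pow, sum_ite_mul_sq]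
  refine (integral_sq_div_sqNormOn_le (Finset.disjoint_filter_filter_not _ _ _).symm
    (hk3.trans hS.ge) (by positivity)).trans ?_
  rw [hS, Fin.card_filter_not_val_lt, Nat.cast_sub hkd,
    show ∀ x : ℝ, 2 * ((1 + σ ^ 2) ^ 2)⁻¹ * (x * (x + 2) * ((k : ℝ) - 2)⁻¹)
      = 2 * (x * (x + 2)) / ((1 + σ ^ 2) ^ 2 * (k - 2)) by intro x; field_simp]
  gcongr ?_ + ?_ / _
  · linarith
  · nlinarith

/-- Let Z ~ N(0, I_d) and Σ diagonal with k entries 1+σ² and d-k entries 1 (k ≥ 3, σ ≥ 0).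
Then E[(ZᵀΣZ)²/(ZᵀΣ²Z)] ≤ 8(k+4) + 4(d-k+3)²/((1+σ²)²(k-2)). -/
theorem stmt_17 (d k : ℕ) (hk3 : 3 ≤ k) (hkd : k ≤ d) (σ : ℝ) (hσ : 0 ≤ σ) :
    ∫ z : Fin d → ℝ,
        (∑ i : Fin d, (if (i : ℕ) < k then 1 + σ ^ 2 else 1) * z i ^ 2) ^ 2
          / (∑ i : Fin d, (if (i : ℕ) < k then 1 + σ ^ 2 else 1) ^ 2 * z i ^ 2)
        ∂(Measure.pi fun _ : Fin d => gaussianReal 0 1)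
      ≤ 8 * ((k : ℝ) + 4) + 4 * ((d : ℝ) - k + 3) ^ 2 / ((1 + σ ^ 2) ^ 2 * ((k : ℝ) - 2)) :=
  stmt_17_general d k hk3 hkd σ
end

section
/- Let x₁,…,xₙ and y₁,…,yₙ be vectors in ℝ^d with n < m < d/2. An orthogonal projection Π onto an m-dimensional subspace of ℝ^d satisfies Πxᵢ = yᵢ for all i if and only if (1) span{y₁,…,yₙ} is orthogonal to span{x₁-y₁,…,xₙ-yₙ}, and (2) Π = V₁V₁ᵀ + V₂UUᵀV₂ᵀ, where V₁ has orthonormal columns forming a basis of Y = span{yᵢ}, V₂ has orthonormal columns forming a basis of (Y ⊕ Z)^⊥ with Z = span{xᵢ-yᵢ}, and U is any matrix of appropriate size with orthonormal columns. -/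
/-!
A symmetric idempotent `P` is the orthogonal projection onto `K = range P`, and `V Vᴴ` is the
orthogonal projection onto the column span of `V` whenever `Vᴴ V = 1`. If `P xᵢ = yᵢ`, then
`Y ≤ K` and `P (xᵢ - yᵢ) = yᵢ - P yᵢ = 0`, so `Z ≤ Kᗮ` and `Y ⟂ Z`. The projection onto `K` is the
projection onto `Y` plus the projection onto `W = Yᗮ ⊓ K`, and `W ≤ (Y ⊔ Z)ᗮ`, so an orthonormal
basis matrix `B` of `W` factors as `V₂ U` with `U = V₂ᴴ B`, giving `P = V₁ V₁ᴴ + V₂ U Uᴴ V₂ᴴ`.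
Conversely, `V₂ᴴ xᵢ = 0` because `xᵢ ∈ Y ⊔ Z`, and `V₁ V₁ᴴ xᵢ = yᵢ` because `xᵢ - yᵢ ∈ Z ≤ Yᗮ`.
-/

open Matrix Submodule Set

section Projection

variable {𝕜 E : Type*} [RCLike 𝕜] [NormedAddCommGroup E] [InnerProductSpace 𝕜 E]

theorem Submodule.starProjection_eq_add_starProjection_orthogonal_inf {Y K : Submodule 𝕜 E}
    [Y.HasOrthogonalProjection] [K.HasOrthogonalProjection] [(Yᗮ ⊓ K).HasOrthogonalProjection]
    (hYK : Y ≤ K) : K.starProjection = Y.starProjection + (Yᗮ ⊓ K).starProjection := by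
  ext u
  refine eq_starProjection_of_mem_of_inner_eq_zero
    (add_mem (hYK (Y.starProjection_apply_mem u)) ((Yᗮ ⊓ K).starProjection_apply_mem u).2) ?_
  intro w hw
  rw [← sup_orthogonal_inf_of_hasOrthogonalProjection hYK] at hw
  obtain ⟨a, ha, b, hb, rfl⟩ := mem_sup.mp hw
  have h₁ := inner_left_of_mem_orthogonal ha (Y.sub_starProjection_mem_orthogonal u)
  have h₂ := inner_left_of_mem_orthogonal ha ((Yᗮ ⊓ K).starProjection_apply_mem u).1
  have h₃ := inner_left_of_mem_orthogonal hb ((Yᗮ ⊓ K).sub_starProjection_mem_orthogonal u)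
  have h₄ := inner_right_of_mem_orthogonal (Y.starProjection_apply_mem u) hb.1
  simp only [_root_.add_apply, inner_add_left, inner_add_right, inner_sub_left] at h₁ h₃ ⊢
  linear_combination h₁ - h₂ + h₃ - h₄

theorem Submodule.finrank_orthogonal_sup_of_isOrtho [FiniteDimensional 𝕜 E] {Y Z : Submodule 𝕜 E}
    (h : Y ⟂ Z) :
    Module.finrank 𝕜 (Y ⊔ Z)ᗮ = Module.finrank 𝕜 E - Module.finrank 𝕜 Y - Module.finrank 𝕜 Z := by
  have hsup := finrank_sup_add_finrank_inf_eq Y Z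
  have hcompl := finrank_add_finrank_orthogonal (Y ⊔ Z)
  rw [h.disjoint.eq_bot, finrank_bot] at hsup
  omega

end Projection

namespace Matrix

variable {𝕜 n ι κ : Type*} [RCLike 𝕜]

def colSpan (V : Matrix n ι 𝕜) : Submodule 𝕜 (EuclideanSpace 𝕜 n) :=
  span 𝕜 (range fun j => WithLp.toLp 2 (fun i => V i j))

theorem colSpan_eq_range_toEuclideanLin [Fintype ι] [DecidableEq ι] (V : Matrix n ι 𝕜) :
    V.colSpan = LinearMap.range (toEuclideanLin V) := by
  apply le_antisymm
  · rw [colSpan, span_le]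
    rintro _ ⟨j, rfl⟩
    refine ⟨EuclideanSpace.single j 1, ?_⟩
    ext i
    simp
  · rintro _ ⟨c, rfl⟩
    have : toEuclideanLin V c = ∑ j, c j • WithLp.toLp 2 (fun i => V i j) := by
      ext i
      simp [mulVec, dotProduct, mul_comm]
    rw [this]
    exact sum_mem fun j _ => smul_mem _ _ (subset_span ⟨j, rfl⟩)

theorem finrank_range_toEuclideanLin [Fintype n] [Fintype ι] [DecidableEq ι] (A : Matrix n ι 𝕜) :
    Module.finrank 𝕜 (LinearMap.range (toEuclideanLin A)) = A.rank := by
  rw [toEuclideanLin_eq_toLin_orthonormal, ← rank_eq_finrank_range_toLin]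

theorem exists_conjTranspose_mul_self_eq_one_colSpan_eq [Fintype n]
    (K : Submodule 𝕜 (EuclideanSpace 𝕜 n)) {k : ℕ} (hk : Module.finrank 𝕜 K = k) :
    ∃ V : Matrix n (Fin k) 𝕜, Vᴴ * V = 1 ∧ V.colSpan = K := by
  set b := (stdOrthonormalBasis 𝕜 K).reindex (finCongr hk)
  refine ⟨Matrix.of fun i j => (b j : EuclideanSpace 𝕜 n) i, ?_, ?_⟩
  · ext j l
    simpa [Matrix.mul_apply, Matrix.one_apply, EuclideanSpace.inner_eq_star_dotProduct,
      dotProduct, mul_comm] using orthonormal_iff_ite.mp b.orthonormal j l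
  · change span 𝕜 (range (K.subtype ∘ b)) = K
    rw [range_comp, span_image, ← b.coe_toBasis, b.toBasis.span_eq, Submodule.map_top,
      range_subtype]

theorem isStarProjection_mul_conjTranspose_self [Fintype n] [Fintype ι] [DecidableEq ι]
    {V : Matrix n ι 𝕜} (hV : Vᴴ * V = 1) : IsStarProjection (V * Vᴴ) where
  isIdempotentElem := by
    rw [IsIdempotentElem, Matrix.mul_assoc, ← Matrix.mul_assoc Vᴴ, hV, Matrix.one_mul]
  isSelfAdjoint := isHermitian_mul_conjTranspose_self V

variable [Fintype n] [DecidableEq n] [Fintype ι] [DecidableEq ι] [Fintype κ] [DecidableEq κ]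

theorem toEuclideanCLM_eq_starProjection_range {P : Matrix n n 𝕜} (hP : IsStarProjection P) :
    toEuclideanCLM (𝕜 := 𝕜) P = (LinearMap.range (toEuclideanLin P)).starProjection := by
  obtain ⟨_, h⟩ := isStarProjection_iff_eq_starProjection_range.mp
    (hP.map (toEuclideanCLM (𝕜 := 𝕜) (n := n)))
  exact h

theorem sub_mem_orthogonal_range_of_toEuclideanLin_apply_eq {P : Matrix n n 𝕜}
    (hP : IsStarProjection P) {x y : EuclideanSpace 𝕜 n} (h : toEuclideanLin P x = y) :
    x - y ∈ (LinearMap.range (toEuclideanLin P))ᗮ := by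
  have hPy : toEuclideanCLM (𝕜 := 𝕜) P y = y := by
    rw [toEuclideanCLM_eq_starProjection_range hP]
    exact starProjection_eq_self_iff.mpr ⟨x, h⟩
  rw [← starProjection_apply_eq_zero_iff, ← toEuclideanCLM_eq_starProjection_range hP,
    _root_.map_sub, hPy]
  exact sub_eq_zero.mpr h

theorem range_toEuclideanLin_mul_conjTranspose_self {V : Matrix n ι 𝕜} (hV : Vᴴ * V = 1) :
    LinearMap.range (toEuclideanLin (V * Vᴴ)) = LinearMap.range (toEuclideanLin V) := by
  apply le_antisymm
  · rintro _ ⟨c, rfl⟩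
    exact ⟨WithLp.toLp 2 (Vᴴ *ᵥ c), by ext; simp [mulVec_mulVec]⟩
  · rintro _ ⟨c, rfl⟩
    refine ⟨WithLp.toLp 2 (V *ᵥ c), ?_⟩
    simp [mulVec_mulVec, hV]

theorem toEuclideanCLM_mul_conjTranspose_self {V : Matrix n ι 𝕜} (hV : Vᴴ * V = 1) :
    toEuclideanCLM (𝕜 := 𝕜) (V * Vᴴ) = V.colSpan.starProjection := by
  simp only [toEuclideanCLM_eq_starProjection_range (isStarProjection_mul_conjTranspose_self hV),
    range_toEuclideanLin_mul_conjTranspose_self hV, colSpan_eq_range_toEuclideanLin]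

theorem mul_conjTranspose_mul_of_colSpan_le {V : Matrix n ι 𝕜} {B : Matrix n κ 𝕜}
    (hV : Vᴴ * V = 1) (hB : Bᴴ * B = 1) (hBV : B.colSpan ≤ V.colSpan) : V * Vᴴ * B = B := by
  have hproj : V * Vᴴ * (B * Bᴴ) = B * Bᴴ := by
    rw [← EmbeddingLike.apply_eq_iff_eq (toEuclideanCLM (𝕜 := 𝕜) (n := n))]
    rw [_root_.map_mul, toEuclideanCLM_mul_conjTranspose_self hV,
      toEuclideanCLM_mul_conjTranspose_self hB]
    ext u : 1
    exact starProjection_eq_self_iff.mpr (hBV (B.colSpan.starProjection_apply_mem u))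
  calc V * Vᴴ * B = V * Vᴴ * (B * (Bᴴ * B)) := by rw [hB, Matrix.mul_one]
    _ = V * Vᴴ * (B * Bᴴ) * B := by simp only [Matrix.mul_assoc]
    _ = B := by rw [hproj, Matrix.mul_assoc, hB, Matrix.mul_one]

theorem exists_mul_mul_conjTranspose_eq_of_colSpan_le {V : Matrix n ι 𝕜} {B : Matrix n κ 𝕜}
    (hV : Vᴴ * V = 1) (hB : Bᴴ * B = 1) (hBV : B.colSpan ≤ V.colSpan) :
    ∃ U : Matrix ι κ 𝕜, Uᴴ * U = 1 ∧ V * U * Uᴴ * Vᴴ = B * Bᴴ := by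
  have hVU : V * (Vᴴ * B) = B := by
    rw [← Matrix.mul_assoc, mul_conjTranspose_mul_of_colSpan_le hV hB hBV]
  refine ⟨Vᴴ * B, ?_, ?_⟩
  · rw [conjTranspose_mul, conjTranspose_conjTranspose, Matrix.mul_assoc, hVU, hB]
  · rw [Matrix.mul_assoc (V * (Vᴴ * B)), ← conjTranspose_mul, hVU]

theorem eq_mul_conjTranspose_add_of_colSpan {P : Matrix n n 𝕜} (hP : IsStarProjection P)
    {Y : Submodule 𝕜 (EuclideanSpace 𝕜 n)} (hYP : Y ≤ LinearMap.range (toEuclideanLin P))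
    {V : Matrix n ι 𝕜} {B : Matrix n κ 𝕜} (hV : Vᴴ * V = 1) (hB : Bᴴ * B = 1)
    (hVY : V.colSpan = Y) (hBP : B.colSpan = Yᗮ ⊓ LinearMap.range (toEuclideanLin P)) :
    P = V * Vᴴ + B * Bᴴ := by
  rw [← EmbeddingLike.apply_eq_iff_eq (toEuclideanCLM (𝕜 := 𝕜) (n := n))]
  simp only [_root_.map_add, toEuclideanCLM_mul_conjTranspose_self hV,
    toEuclideanCLM_mul_conjTranspose_self hB, hVY, hBP, toEuclideanCLM_eq_starProjection_range hP]
  exact starProjection_eq_add_starProjection_orthogonal_inf hYP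

theorem toEuclideanCLM_mul_conjTranspose_add_apply_eq {Y Z : Submodule 𝕜 (EuclideanSpace 𝕜 n)}
    (hYZ : Y ⟂ Z) {V₁ : Matrix n ι 𝕜} {V₂ : Matrix n κ 𝕜} (hV₁ : V₁ᴴ * V₁ = 1)
    (hV₂ : V₂ᴴ * V₂ = 1) (hV₁Y : V₁.colSpan = Y) (hV₂YZ : V₂.colSpan = (Y ⊔ Z)ᗮ)
    (N : Matrix κ κ 𝕜) {x y : EuclideanSpace 𝕜 n} (hy : y ∈ Y) (hxy : x - y ∈ Z) :
    toEuclideanCLM (𝕜 := 𝕜) (V₁ * V₁ᴴ + V₂ * N * V₂ᴴ) x = y := by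
  have hx : x ∈ Y ⊔ Z := by simpa using add_mem (mem_sup_left hy) (mem_sup_right hxy)
  have hN : V₂ * N * V₂ᴴ = V₂ * N * V₂ᴴ * (V₂ * V₂ᴴ) := by
    rw [← Matrix.mul_assoc, Matrix.mul_assoc _ V₂ᴴ, hV₂, Matrix.mul_one]
  rw [hN, _root_.map_add, _root_.map_mul, toEuclideanCLM_mul_conjTranspose_self hV₁,
    toEuclideanCLM_mul_conjTranspose_self hV₂, hV₁Y, hV₂YZ, _root_.add_apply, mul_apply_eq_comp,
    starProjection_orthogonal_apply_eq_zero hx, _root_.map_zero, add_zero, ← sub_add_cancel x y,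
    _root_.map_add, starProjection_eq_self_iff.mpr hy,
    (Y.starProjection_apply_eq_zero_iff).mpr (hYZ.symm.le hxy), zero_add]

end Matrix

theorem stmt_18_general (d n m : ℕ)
    (x y : Fin n → EuclideanSpace ℝ (Fin d))
    (P : Matrix (Fin d) (Fin d) ℝ)
    (hsym : Pᵀ = P) (hidem : P * P = P) (hrank : P.rank = m) :
    (∀ i, Matrix.toEuclideanLin P (x i) = y i) ↔
      ((∀ u ∈ span ℝ (range y), ∀ w ∈ span ℝ (range fun i => x i - y i),
          (inner ℝ u w : ℝ) = 0)
        ∧ ∃ (V₁ : Matrix (Fin d) (Fin (Module.finrank ℝ (span ℝ (range y)))) ℝ)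
            (V₂ : Matrix (Fin d)
              (Fin (d - Module.finrank ℝ (span ℝ (range y))
                - Module.finrank ℝ (span ℝ (range fun i => x i - y i)))) ℝ)
            (U : Matrix
              (Fin (d - Module.finrank ℝ (span ℝ (range y))
                - Module.finrank ℝ (span ℝ (range fun i => x i - y i))))
              (Fin (m - Module.finrank ℝ (span ℝ (range y)))) ℝ),
          V₁ᵀ * V₁ = 1 ∧ V₂ᵀ * V₂ = 1 ∧ Uᵀ * U = 1
          ∧ span ℝ (range fun j => (WithLp.toLp 2 (fun i => V₁ i j) : EuclideanSpace ℝ (Fin d)))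
              = span ℝ (range y)
          ∧ span ℝ (range fun j => (WithLp.toLp 2 (fun i => V₂ i j) : EuclideanSpace ℝ (Fin d)))
              = (span ℝ (range y) ⊔ span ℝ (range fun i => x i - y i))ᗮ
          ∧ P = V₁ * V₁ᵀ + V₂ * U * Uᵀ * V₂ᵀ) := by
  simp only [← conjTranspose_eq_transpose_of_trivial] at hsym ⊢
  set Y := span ℝ (range y)
  set Z := span ℝ (range fun i => x i - y i)
  constructor
  · intro h
    have hP : IsStarProjection P := ⟨hidem, hsym⟩
    set K := LinearMap.range (toEuclideanLin P)
    have hYK : Y ≤ K := span_le.mpr (range_subset_iff.mpr fun i => ⟨x i, h i⟩)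
    have hZK : Z ≤ Kᗮ := span_le.mpr (range_subset_iff.mpr fun i =>
      sub_mem_orthogonal_range_of_toEuclideanLin_apply_eq hP (h i))
    have hYZ : Y ⟂ Z := (isOrtho_orthogonal_right K).mono hYK hZK
    have hK : Module.finrank ℝ K = m := by rw [finrank_range_toEuclideanLin, hrank]
    obtain ⟨V₁, hV₁, hV₁Y⟩ := exists_conjTranspose_mul_self_eq_one_colSpan_eq Y rfl
    obtain ⟨V₂, hV₂, hV₂YZ⟩ := exists_conjTranspose_mul_self_eq_one_colSpan_eq (Y ⊔ Z)ᗮ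
      (by rw [finrank_orthogonal_sup_of_isOrtho hYZ, finrank_euclideanSpace_fin])
    have hYm : Module.finrank ℝ Y ≤ m := hK ▸ Submodule.finrank_mono hYK
    obtain ⟨B, hB, hBW⟩ := exists_conjTranspose_mul_self_eq_one_colSpan_eq
      (k := m - Module.finrank ℝ Y) (Yᗮ ⊓ K) (finrank_add_inf_finrank_orthogonal' hYK (by omega))
    have hWYZ : Yᗮ ⊓ K ≤ (Y ⊔ Z)ᗮ :=
      inf_orthogonal Y Z ▸ inf_le_inf_left _ (isOrtho_iff_le.mpr hZK).symm.le
    obtain ⟨U, hU, hUB⟩ := exists_mul_mul_conjTranspose_eq_of_colSpan_le hV₂ hB (hBW ▸ hV₂YZ ▸ hWYZ)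
    refine ⟨isOrtho_iff_inner_eq.mp hYZ, V₁, V₂, U, hV₁, hV₂, hU, hV₁Y, hV₂YZ, ?_⟩
    rw [hUB]
    exact eq_mul_conjTranspose_add_of_colSpan hP hYK hV₁ hB hV₁Y hBW
  · rintro ⟨hYZ, V₁, V₂, U, hV₁, hV₂, -, hV₁Y, hV₂YZ, rfl⟩ i
    rw [Matrix.mul_assoc V₂ U]
    exact toEuclideanCLM_mul_conjTranspose_add_apply_eq (isOrtho_iff_inner_eq.mpr hYZ) hV₁ hV₂
      hV₁Y hV₂YZ _ (subset_span ⟨i, rfl⟩) (subset_span ⟨i, rfl⟩)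

/-- Characterization of rank-m orthogonal projections Π with Πxᵢ = yᵢ:
given that Π is a symmetric idempotent of rank m (n < m < d/2), Πxᵢ = yᵢ for all i iff
(1) span{yᵢ} ⟂ span{xᵢ - yᵢ}, and
(2) Π = V₁V₁ᵀ + V₂UUᵀV₂ᵀ with V₁ an orthonormal basis matrix of Y = span{yᵢ},
V₂ an orthonormal basis matrix of (Y ⊔ Z)ᗮ where Z = span{xᵢ-yᵢ}, and U any matrix
with orthonormal columns of the appropriate size. -/
theorem stmt_18 (d n m : ℕ) (hnm : n < m) (hmd : 2 * m < d)
    (x y : Fin n → EuclideanSpace ℝ (Fin d))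
    (P : Matrix (Fin d) (Fin d) ℝ)
    (hsym : Pᵀ = P) (hidem : P * P = P) (hrank : P.rank = m) :
    (∀ i, Matrix.toEuclideanLin P (x i) = y i) ↔
      ((∀ u ∈ span ℝ (range y), ∀ w ∈ span ℝ (range fun i => x i - y i),
          (inner ℝ u w : ℝ) = 0)
        ∧ ∃ (V₁ : Matrix (Fin d) (Fin (Module.finrank ℝ (span ℝ (range y)))) ℝ)
            (V₂ : Matrix (Fin d)
              (Fin (d - Module.finrank ℝ (span ℝ (range y))
                - Module.finrank ℝ (span ℝ (range fun i => x i - y i)))) ℝ)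
            (U : Matrix
              (Fin (d - Module.finrank ℝ (span ℝ (range y))
                - Module.finrank ℝ (span ℝ (range fun i => x i - y i))))
              (Fin (m - Module.finrank ℝ (span ℝ (range y)))) ℝ),
          V₁ᵀ * V₁ = 1 ∧ V₂ᵀ * V₂ = 1 ∧ Uᵀ * U = 1
          ∧ span ℝ (range fun j => (WithLp.toLp 2 (fun i => V₁ i j) : EuclideanSpace ℝ (Fin d)))
              = span ℝ (range y)
          ∧ span ℝ (range fun j => (WithLp.toLp 2 (fun i => V₂ i j) : EuclideanSpace ℝ (Fin d)))
              = (span ℝ (range y) ⊔ span ℝ (range fun i => x i - y i))ᗮ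
          ∧ P = V₁ * V₁ᵀ + V₂ * U * Uᵀ * V₂ᵀ) :=
  stmt_18_general d n m x y P hsym hidem hrank
end
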